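/- Let Σ̂ be an n×n symmetric positive definite matrix partitioned into blocks Σ̂₁₁ (n₁×n₁), Σ̂₁₂ (n₁×n₂), Σ̂₂₁ = Σ̂₁₂ᵀ, Σ̂₂₂ (n₂×n₂) with n = n₁ + n₂, and set Σ̃₁₁ = Σ̂₁₁ − Σ̂₁₂Σ̂₂₂⁻¹Σ̂₂₁. Let n₂ ≤ k and let H ∈ ℝ^{n×k} have the block form with upper blocks H₁₁ ∈ ℝ^{n₁×(k−n₂)}, H₁₂ ∈ ℝ^{n₁×n₂} and lower blocks 0 ∈ ℝ^{n₂×(k−n₂)}, H₂₂ ∈ ℝ^{n₂×n₂} with H₂₂ invertible. Let D = diag(D₁, 0) with D₁ an n₁×n₁ diagonal matrix such that H₁₁H₁₁ᵀ + D₁ is positive definite, and set K = Σ̂₁₂Σ̂₂₂⁻¹ − H₁₂H₂₂⁻¹. Then I(Σ̂ ‖ HHᵀ + D) = I(Σ̃₁₁ ‖ H₁₁H₁₁ᵀ + D₁) + I(Σ̂₂₂ ‖ H₂₂H₂₂ᵀ) + (1/2)·tr(Σ̂₂₂·Kᵀ·(H₁₁H₁₁ᵀ + D₁)⁻¹·K).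 -/

import Mathlib

open Matrix

/-- I-divergence between two positive definite matrices. -/
noncomputable def Idiv {ι : Type} [Fintype ι] [DecidableEq ι]
    (S1 S2 : Matrix ι ι ℝ) : ℝ :=
  (1 / 2) * Real.log (S2.det / S1.det) - (Fintype.card ι : ℝ) / 2
    + (1 / 2) * (S2⁻¹ * S1).trace

private lemma mul_cancel_left' {l q : Type} [Fintype l] [DecidableEq l] [Fintype q]
    {A B : Matrix l l ℝ} (h : A * B = 1) (X : Matrix l q ℝ) :
    A * (B * X) = X := by rw [← Matrix.mul_assoc, h, Matrix.one_mul]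

private lemma trace_fromBlocks' {l q : Type} [Fintype l] [Fintype q]
    (A : Matrix l l ℝ) (B : Matrix l q ℝ) (C : Matrix q l ℝ) (D : Matrix q q ℝ) :
    (fromBlocks A B C D).trace = A.trace + D.trace := by
  simp [Matrix.trace, Fintype.sum_sum_type]

set_option maxHeartbeats 1000000 in
/-- Decomposition of the I-divergence for singular `D` (Lemma 7.5).
Here `m` plays the role of `k − n₂`, so the column index type
`Fin m ⊕ Fin n2` corresponds to `k` columns. -/
theorem stmt_15 (n1 n2 m : ℕ)
    (Shat : Matrix (Fin n1 ⊕ Fin n2) (Fin n1 ⊕ Fin n2) ℝ) (hShat : Shat.PosDef)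
    (St11 : Matrix (Fin n1) (Fin n1) ℝ)
    (hSt11 : St11 = Shat.toBlocks₁₁
      - Shat.toBlocks₁₂ * Shat.toBlocks₂₂⁻¹ * Shat.toBlocks₂₁)
    (H11 : Matrix (Fin n1) (Fin m) ℝ) (H12 : Matrix (Fin n1) (Fin n2) ℝ)
    (H22 : Matrix (Fin n2) (Fin n2) ℝ) (hH22 : IsUnit H22)
    (H : Matrix (Fin n1 ⊕ Fin n2) (Fin m ⊕ Fin n2) ℝ)
    (hH : H = fromBlocks H11 H12 0 H22)
    (D1 : Matrix (Fin n1) (Fin n1) ℝ) (hD1 : D1.IsDiag)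
    (hpos : (H11 * H11ᵀ + D1).PosDef)
    (D : Matrix (Fin n1 ⊕ Fin n2) (Fin n1 ⊕ Fin n2) ℝ)
    (hD : D = fromBlocks D1 0 0 0)
    (K : Matrix (Fin n1) (Fin n2) ℝ)
    (hK : K = Shat.toBlocks₁₂ * Shat.toBlocks₂₂⁻¹ - H12 * H22⁻¹) :
    Idiv Shat (H * Hᵀ + D) =
      Idiv St11 (H11 * H11ᵀ + D1) + Idiv Shat.toBlocks₂₂ (H22 * H22ᵀ)
        + (1 / 2) * (Shat.toBlocks₂₂ * Kᵀ * (H11 * H11ᵀ + D1)⁻¹ * K).trace := by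
  classical
  set A := Shat.toBlocks₁₁ with hA
  set B := Shat.toBlocks₁₂ with hB
  set C := Shat.toBlocks₂₂ with hC0
  set P := H11 * H11ᵀ + D1 with hPdef
  set Q := H22 * H22ᵀ with hQdef
  set F := H12 * H22⁻¹ with hFdef
  -- symmetry facts
  have hHerm : Shatᵀ = Shat := by
    have := hShat.isHermitian
    rwa [Matrix.IsHermitian, Matrix.conjTranspose_eq_transpose_of_trivial] at this
  have hB21 : Shat.toBlocks₂₁ = Bᵀ := by
    ext i j
    have := congrFun (congrFun hHerm (Sum.inr i)) (Sum.inl j)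
    simpa [hB, Matrix.toBlocks₂₁, Matrix.toBlocks₁₂, Matrix.transpose_apply] using this.symm
  have hCsym : Cᵀ = C := by
    ext i j
    have := congrFun (congrFun hHerm (Sum.inr i)) (Sum.inr j)
    simpa [hC0, Matrix.toBlocks₂₂, Matrix.transpose_apply] using this
  have hS : Shat = fromBlocks A B Bᵀ C := by
    rw [← hB21, hA, hB, hC0, Matrix.fromBlocks_toBlocks]
  -- positive definiteness of C
  have hCpd : C.PosDef := by
    refine Matrix.PosDef.of_dotProduct_mulVec_pos ?_ ?_
    · rw [Matrix.IsHermitian, Matrix.conjTranspose_eq_transpose_of_trivial]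
      exact hCsym
    · intro x hx
      have hx' : (Sum.elim (0 : Fin n1 → ℝ) x) ≠ 0 := by
        intro h
        apply hx
        funext i
        exact congrFun h (Sum.inr i)
      have := hShat.dotProduct_mulVec_pos hx'
      rw [hS] at this
      simpa [Matrix.fromBlocks_mulVec, sumElim_dotProduct_sumElim] using this
  -- determinant positivity and units
  have hdetH22 : H22.det ≠ 0 := by
    have := (Matrix.isUnit_iff_isUnit_det H22).mp hH22
    exact this.ne_zero
  have hdetQ : 0 < Q.det := by
    rw [hQdef, Matrix.det_mul, Matrix.det_transpose]
    exact mul_self_pos.mpr hdetH22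
  have hdetC : 0 < C.det := hCpd.det_pos
  have hdetP : 0 < P.det := hpos.det_pos
  have hdetShat : 0 < Shat.det := hShat.det_pos
  haveI : Invertible C := C.invertibleOfIsUnitDet (isUnit_iff_ne_zero.mpr hdetC.ne')
  haveI : Invertible Q := Q.invertibleOfIsUnitDet (isUnit_iff_ne_zero.mpr hdetQ.ne')
  -- cancellation lemmas
  have h22 : H22 * H22⁻¹ = 1 := Matrix.mul_nonsing_inv _ (isUnit_iff_ne_zero.mpr hdetH22)
  have h22' : H22⁻¹ * H22 = 1 := Matrix.nonsing_inv_mul _ (isUnit_iff_ne_zero.mpr hdetH22)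
  have hdetH22t : H22ᵀ.det ≠ 0 := by rwa [Matrix.det_transpose]
  have h22t : H22ᵀ * H22ᵀ⁻¹ = 1 := Matrix.mul_nonsing_inv _ (isUnit_iff_ne_zero.mpr hdetH22t)
  have h22t' : H22ᵀ⁻¹ * H22ᵀ = 1 := Matrix.nonsing_inv_mul _ (isUnit_iff_ne_zero.mpr hdetH22t)
  have hPP : P * P⁻¹ = 1 := Matrix.mul_nonsing_inv _ (isUnit_iff_ne_zero.mpr hdetP.ne')
  have hPP' : P⁻¹ * P = 1 := Matrix.nonsing_inv_mul _ (isUnit_iff_ne_zero.mpr hdetP.ne')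
  have hQQ : Q * Q⁻¹ = 1 := Matrix.mul_nonsing_inv _ (isUnit_iff_ne_zero.mpr hdetQ.ne')
  have hCC : C * C⁻¹ = 1 := Matrix.mul_nonsing_inv _ (isUnit_iff_ne_zero.mpr hdetC.ne')
  have hCC' : C⁻¹ * C = 1 := Matrix.nonsing_inv_mul _ (isUnit_iff_ne_zero.mpr hdetC.ne')
  have hCinvT : C⁻¹ᵀ = C⁻¹ := by rw [Matrix.transpose_nonsing_inv, hCsym]
  -- block form of M = H Hᵀ + D
  have hM : H * Hᵀ + D = fromBlocks (P + H12 * H12ᵀ) (H12 * H22ᵀ) (H22 * H12ᵀ) Q := by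
    rw [hH, hD, Matrix.fromBlocks_transpose, Matrix.fromBlocks_multiply,
      Matrix.fromBlocks_add, Matrix.fromBlocks_inj]
    refine ⟨by rw [hPdef]; abel, by simp, by simp, by simp [hQdef]⟩
  -- explicit inverse of M
  set N : Matrix (Fin n1 ⊕ Fin n2) (Fin n1 ⊕ Fin n2) ℝ :=
    fromBlocks P⁻¹ (-(P⁻¹ * F)) (-(Fᵀ * P⁻¹)) (Fᵀ * P⁻¹ * F + Q⁻¹) with hNdef
  have hFt : Fᵀ = H22ᵀ⁻¹ * H12ᵀ := by
    rw [hFdef, Matrix.transpose_mul, Matrix.transpose_nonsing_inv]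
  have hMN : (H * Hᵀ + D) * N = 1 := by
    rw [hM, hNdef, Matrix.fromBlocks_multiply, ← Matrix.fromBlocks_one, Matrix.fromBlocks_inj]
    have hQinv : Q⁻¹ = H22ᵀ⁻¹ * H22⁻¹ := by rw [hQdef, Matrix.mul_inv_rev]
    refine ⟨?_, ?_, ?_, ?_⟩
    · rw [hFt]
      simp only [Matrix.mul_neg, Matrix.add_mul, Matrix.mul_assoc, hPP,
        mul_cancel_left' h22t]
      abel
    · rw [hFt, hFdef, hQinv]
      simp only [Matrix.mul_neg, Matrix.add_mul, Matrix.mul_add, Matrix.mul_assoc,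
        mul_cancel_left' h22t, mul_cancel_left' hPP, Matrix.mul_one]
      abel
    · rw [hFt, hQdef]
      simp only [Matrix.mul_neg, Matrix.mul_assoc, mul_cancel_left' h22t]
      abel
    · rw [hFt, hQdef]
      simp only [Matrix.mul_neg, Matrix.mul_add, Matrix.mul_assoc,
        mul_cancel_left' h22t, mul_cancel_left' h22t']
      rw [← Matrix.mul_assoc H22 H22ᵀ, ← hQdef, hQQ]
      abel
  have hNinv : (H * Hᵀ + D)⁻¹ = N := Matrix.inv_eq_right_inv hMN
  -- determinants
  have hdetM : (H * Hᵀ + D).det = Q.det * P.det := by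
    rw [hM, Matrix.det_fromBlocks₂₂, Matrix.invOf_eq_nonsing_inv]
    congr 1
    have : H12 * H22ᵀ * Q⁻¹ * (H22 * H12ᵀ) = H12 * H12ᵀ := by
      rw [hQdef, Matrix.mul_inv_rev]
      simp only [Matrix.mul_assoc, mul_cancel_left' h22t, mul_cancel_left' h22']
    rw [this, add_sub_cancel_right]
  have hdetShat' : Shat.det = C.det * St11.det := by
    rw [hS, Matrix.det_fromBlocks₂₂, Matrix.invOf_eq_nonsing_inv, hSt11, hB21]
  have hdetSt : 0 < St11.det := by
    rw [hdetShat'] at hdetShat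
    nlinarith [hdetC, hdetShat]
  -- log part
  have hlog : Real.log ((H * Hᵀ + D).det / Shat.det)
      = Real.log (P.det / St11.det) + Real.log (Q.det / C.det) := by
    rw [hdetM, hdetShat']
    rw [show Q.det * P.det / (C.det * St11.det)
        = P.det / St11.det * (Q.det / C.det) by field_simp]
    rw [Real.log_mul (by positivity) (by positivity)]
  -- trace part
  have hKC : K * C = B - F * C := by
    rw [hK, Matrix.sub_mul, Matrix.mul_assoc, hCC', Matrix.mul_one]
  have hKt : Kᵀ = C⁻¹ * Bᵀ - Fᵀ := by
    rw [hK, Matrix.transpose_sub, Matrix.transpose_mul, hCinvT]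
  have hKCK : K * C * Kᵀ
      = B * (C⁻¹ * Bᵀ) - B * Fᵀ - F * Bᵀ + F * (C * Fᵀ) := by
    rw [hKC, hKt, Matrix.sub_mul, Matrix.mul_sub, Matrix.mul_sub]
    rw [show F * C * (C⁻¹ * Bᵀ) = F * Bᵀ by
      rw [Matrix.mul_assoc, mul_cancel_left' hCC]]
    rw [Matrix.mul_assoc F C Fᵀ]
    abel
  have htcyc : (C * Kᵀ * P⁻¹ * K).trace = (P⁻¹ * (K * C * Kᵀ)).trace := by
    rw [Matrix.trace_mul_comm (C * Kᵀ * P⁻¹) K]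
    rw [show K * (C * Kᵀ * P⁻¹) = (K * C * Kᵀ) * P⁻¹ by
      simp only [Matrix.mul_assoc]]
    rw [Matrix.trace_mul_comm]
  have htr : ((H * Hᵀ + D)⁻¹ * Shat).trace
      = (P⁻¹ * St11).trace + (Q⁻¹ * C).trace + (C * Kᵀ * P⁻¹ * K).trace := by
    rw [hNinv, hS, hNdef, Matrix.fromBlocks_multiply, trace_fromBlocks', htcyc, hKCK, hSt11,
      hB21]
    simp only [Matrix.mul_sub, Matrix.mul_add, Matrix.neg_mul, Matrix.add_mul,
      Matrix.trace_add, Matrix.trace_sub, Matrix.trace_neg, Matrix.mul_assoc]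
    have e1 : (Fᵀ * (P⁻¹ * B)).trace = (P⁻¹ * (B * Fᵀ)).trace := by
      rw [Matrix.trace_mul_comm, Matrix.mul_assoc]
    have e2 : (Fᵀ * (P⁻¹ * (F * C))).trace = (P⁻¹ * (F * (C * Fᵀ))).trace := by
      rw [Matrix.trace_mul_comm, Matrix.mul_assoc, Matrix.mul_assoc]
    rw [e1, e2]
    ring
  -- assemble
  have hcard1 : (Fintype.card (Fin n1 ⊕ Fin n2) : ℝ)
      = (Fintype.card (Fin n1) : ℝ) + (Fintype.card (Fin n2) : ℝ) := by
    simp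
  rw [Idiv, Idiv, Idiv, hlog, htr, hcard1]
  ring
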